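/- Let A = σ₁ x₁y₁* + σ₂ x₂y₂* + ⋯ ∈ Mₙ(ℂ) be an SVD with σ₁ > 0, and suppose x₂ ∈ ℂ e₁ while all other left-singular vectors xᵢ (i ≠ 2) are orthogonal to e₁. If A has zero entries at positions (1,p), …, (1,n) (p ≥ 2), then B := σ₂ x₂ y₂* also has zero entries at these positions, A ⊥ B, and B is not BJ-orthogonal to A when σ₂ > 0. -/

import Mathlib

/-!
Any matrix `∑ τᵢ xᵢ yᵢ*` built on the orthonormal families of the SVD of `A` has operator norm
at most `maxᵢ |τᵢ|` (Bessel's inequality) and at least every `|τⱼ|` (evaluate at `yⱼ`).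
Since `A + cB` differs from `A` only in the second coefficient, its norm is still `≥ σ₁ = ‖A‖`.
Conversely, for a suitable `t > 0` every coefficient of `B - tA` has modulus `< σ₂ = ‖B‖`.
The first rows of `A` and `B` agree because `x₂` is the only left singular vector with a nonzero
first coordinate.
-/

open Matrix

/-- The operator (spectral) norm of a complex matrix, induced by the Euclidean norm on `ℂⁿ`. -/
noncomputable def opNorm {n : ℕ} (A : Matrix (Fin n) (Fin n) ℂ) : ℝ :=
  ‖Matrix.toEuclideanCLM (𝕜 := ℂ) (n := Fin n) A‖

/-- Birkhoff–James orthogonality of matrices with respect to the operator norm. -/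
def BJ {n : ℕ} (A B : Matrix (Fin n) (Fin n) ℂ) : Prop :=
  ∀ c : ℂ, opNorm A ≤ opNorm (A + c • B)

section Orthonormal

variable {𝕜 E F ι : Type*} [RCLike 𝕜] [NormedAddCommGroup E] [InnerProductSpace 𝕜 E]
  [NormedAddCommGroup F] [InnerProductSpace 𝕜 F] [Fintype ι]

open scoped InnerProductSpace

theorem Orthonormal.norm_sum_smul_sq {w : ι → F} (hw : Orthonormal 𝕜 w) (c : ι → 𝕜) :
    ‖∑ i, c i • w i‖ ^ 2 = ∑ i, ‖c i‖ ^ 2 := by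
  rw [@norm_sq_eq_re_inner 𝕜, hw.inner_sum, map_sum]
  refine Finset.sum_congr rfl fun i _ => ?_
  rw [RCLike.conj_mul, ← RCLike.ofReal_pow, RCLike.ofReal_re]

theorem Orthonormal.norm_sum_mul_inner_smul_le {v : ι → E} {w : ι → F} (hv : Orthonormal 𝕜 v)
    (hw : Orthonormal 𝕜 w) {τ : ι → 𝕜} {C : ℝ} (hC : 0 ≤ C) (hτ : ∀ i, ‖τ i‖ ≤ C) (u : E) :
    ‖∑ i, (τ i * ⟪v i, u⟫_𝕜) • w i‖ ≤ C * ‖u‖ := by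
  refine le_of_sq_le_sq ?_ (by positivity)
  calc ‖∑ i, (τ i * ⟪v i, u⟫_𝕜) • w i‖ ^ 2 = ∑ i, ‖τ i‖ ^ 2 * ‖⟪v i, u⟫_𝕜‖ ^ 2 := by
        simp only [hw.norm_sum_smul_sq, norm_mul, mul_pow]
    _ ≤ ∑ i, C ^ 2 * ‖⟪v i, u⟫_𝕜‖ ^ 2 := by
        gcongr with i
        exact hτ i
    _ = C ^ 2 * ∑ i, ‖⟪v i, u⟫_𝕜‖ ^ 2 := (Finset.mul_sum ..).symm
    _ ≤ C ^ 2 * ‖u‖ ^ 2 := by gcongr; exact hv.sum_inner_products_le u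
    _ = (C * ‖u‖) ^ 2 := (mul_pow ..).symm

end Orthonormal

theorem orthonormal_toLp_of_star_dotProduct {𝕜 ι m : Type*} [RCLike 𝕜] [DecidableEq ι]
    [Fintype m] {v : ι → m → 𝕜} (hv : ∀ i j, star (v i) ⬝ᵥ v j = if i = j then 1 else 0) :
    Orthonormal 𝕜 fun i => WithLp.toLp 2 (v i) := by
  rw [orthonormal_iff_ite]
  intro i j
  rw [EuclideanSpace.inner_toLp_toLp, dotProduct_comm, hv]

noncomputable def rankOneSum {m n ι : Type*} [Fintype ι] (x : ι → m → ℂ) (y : ι → n → ℂ)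
    (τ : ι → ℂ) : Matrix m n ℂ :=
  ∑ i, τ i • vecMulVec (x i) (star (y i))

section RankOneSum

variable {n : ℕ} {x y : Fin n → Fin n → ℂ}

theorem rankOneSum_add_smul (τ τ' : Fin n → ℂ) (c : ℂ) :
    rankOneSum x y τ + c • rankOneSum x y τ' = rankOneSum x y (τ + c • τ') := by
  simp only [rankOneSum, Finset.smul_sum, smul_smul, ← Finset.sum_add_distrib, Pi.add_apply,
    Pi.smul_apply, smul_eq_mul, add_smul]

theorem rankOneSum_single (j : Fin n) (s : ℂ) :
    rankOneSum x y (Pi.single j s) = s • vecMulVec (x j) (star (y j)) := by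
  simp [rankOneSum, Pi.single_apply, ite_smul]

theorem rankOneSum_apply_eq_single {τ : Fin n → ℂ} {j r : Fin n} (hxr : ∀ i, i ≠ j → x i r = 0)
    (c : Fin n) : rankOneSum x y τ r c = rankOneSum x y (Pi.single j (τ j)) r c := by
  rw [rankOneSum_single, rankOneSum, Matrix.sum_apply, Finset.sum_eq_single j]
  · intro i _ hij
    simp [vecMulVec_apply, hxr i hij]
  · simp

theorem toEuclideanCLM_rankOneSum_apply (τ : Fin n → ℂ) (u : EuclideanSpace ℂ (Fin n)) :
    toEuclideanCLM (𝕜 := ℂ) (n := Fin n) (rankOneSum x y τ) u =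
      ∑ i, (τ i * inner ℂ (WithLp.toLp 2 (y i)) u) • WithLp.toLp 2 (x i) := by
  change WithLp.toLp 2 (rankOneSum x y τ *ᵥ u.ofLp) = _
  simp only [rankOneSum, sum_mulVec, smul_mulVec, vecMulVec_mulVec,
    op_smul_eq_smul, smul_smul, WithLp.toLp_sum, WithLp.toLp_smul,
    EuclideanSpace.inner_eq_star_dotProduct, dotProduct_comm u.ofLp]

theorem opNorm_rankOneSum_le (hx : Orthonormal ℂ fun i => WithLp.toLp 2 (x i))
    (hy : Orthonormal ℂ fun i => WithLp.toLp 2 (y i)) {τ : Fin n → ℂ} {C : ℝ} (hC : 0 ≤ C)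
    (hτ : ∀ i, ‖τ i‖ ≤ C) :
    opNorm (rankOneSum x y τ) ≤ C :=
  ContinuousLinearMap.opNorm_le_bound _ hC fun u => by
    rw [toEuclideanCLM_rankOneSum_apply]
    exact hy.norm_sum_mul_inner_smul_le hx hC hτ u

theorem norm_le_opNorm_rankOneSum (hx : Orthonormal ℂ fun i => WithLp.toLp 2 (x i))
    (hy : Orthonormal ℂ fun i => WithLp.toLp 2 (y i)) (τ : Fin n → ℂ) (j : Fin n) :
    ‖τ j‖ ≤ opNorm (rankOneSum x y τ) := by
  have hmaps : toEuclideanCLM (𝕜 := ℂ) (n := Fin n) (rankOneSum x y τ) (WithLp.toLp 2 (y j)) =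
      τ j • WithLp.toLp 2 (x j) := by
    rw [toEuclideanCLM_rankOneSum_apply]
    simp [orthonormal_iff_ite.mp hy]
  simpa [opNorm, hmaps, norm_smul, hx.norm_eq_one, hy.norm_eq_one] using
    (toEuclideanCLM (𝕜 := ℂ) (n := Fin n) (rankOneSum x y τ)).le_opNorm (WithLp.toLp 2 (y j))

theorem bj_rankOneSum_single (hx : Orthonormal ℂ fun i => WithLp.toLp 2 (x i))
    (hy : Orthonormal ℂ fun i => WithLp.toLp 2 (y i)) {τ : Fin n → ℂ} {j k : Fin n} (hkj : k ≠ j)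
    (hk : ∀ i, ‖τ i‖ ≤ ‖τ k‖) (s : ℂ) :
    BJ (rankOneSum x y τ) (rankOneSum x y (Pi.single j s)) := fun c => by
  rw [rankOneSum_add_smul]
  calc opNorm (rankOneSum x y τ) ≤ ‖τ k‖ := opNorm_rankOneSum_le hx hy (norm_nonneg _) hk
    _ = ‖(τ + c • Pi.single j s : Fin n → ℂ) k‖ := by simp [hkj]
    _ ≤ _ := norm_le_opNorm_rankOneSum hx hy _ k

theorem not_bj_rankOneSum_single (hx : Orthonormal ℂ fun i => WithLp.toLp 2 (x i))
    (hy : Orthonormal ℂ fun i => WithLp.toLp 2 (y i)) {τ : Fin n → ℂ} {j : Fin n} (hj : τ j ≠ 0) :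
    ¬ BJ (rankOneSum x y (Pi.single j (τ j))) (rankOneSum x y τ) := by
  intro hBJ
  set a := ‖τ j‖
  set M := ∑ i, ‖τ i‖
  have ha : 0 < a := norm_pos_iff.mpr hj
  have hM : ∀ i, ‖τ i‖ ≤ M := fun i =>
    Finset.single_le_sum (fun i _ => norm_nonneg (τ i)) (Finset.mem_univ i)
  have hM0 : 0 ≤ M := (norm_nonneg _).trans (hM j)
  -- `t` is chosen so that `(1 - t) a = t M = M a / (M + a) < a`
  set t := a / (M + a)
  have ht0 : 0 ≤ t := by positivity
  have ht1 : t ≤ 1 := div_le_one_of_le₀ (by linarith) (by positivity)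
  have hcoef :
      ∀ i, ‖(Pi.single j (τ j) + ((-t : ℝ) : ℂ) • τ : Fin n → ℂ) i‖ ≤ M * a / (M + a) := by
    intro i
    rcases eq_or_ne i j with rfl | hij
    · have : τ i + ((-t : ℝ) : ℂ) * τ i = ((1 - t : ℝ) : ℂ) * τ i := by push_cast; ring
      simp only [Pi.add_apply, Pi.single_eq_same, Pi.smul_apply, smul_eq_mul, this, norm_mul,
        Complex.norm_real, Real.norm_of_nonneg (sub_nonneg.mpr ht1)]
      refine le_of_eq ?_
      change (1 - a / (M + a)) * a = M * a / (M + a)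
      field_simp
      ring
    · simp only [Pi.add_apply, Pi.single_eq_of_ne hij, Pi.smul_apply, smul_eq_mul, zero_add,
        norm_mul, Complex.norm_real, norm_neg, Real.norm_of_nonneg ht0]
      calc t * ‖τ i‖ ≤ t * M := by gcongr; exact hM i
        _ = M * a / (M + a) := by ring
  have hlt : M * a / (M + a) < a := by
    rw [div_lt_iff₀ (by positivity)]
    nlinarith
  have hBJt := hBJ ((-t : ℝ) : ℂ)
  rw [rankOneSum_add_smul] at hBJt
  have hB := norm_le_opNorm_rankOneSum hx hy (Pi.single j (τ j)) j
  rw [Pi.single_eq_same] at hB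
  linarith [opNorm_rankOneSum_le hx hy (by positivity) hcoef]

end RankOneSum

/-- In an SVD `A = Σ σᵢ xᵢ yᵢ*` with `x₂ ∈ ℂ e₁` and all other `xᵢ ⊥ e₁`, if `A`
vanishes at the positions `(1,p), …, (1,n)` (`p ≥ 2`), then `B = σ₂ x₂ y₂*` also
vanishes there, `A ⊥ B`, and if `σ₂ > 0` then `¬ B ⊥ A`. -/
theorem stmt18 {n : ℕ} (hn : 2 ≤ n) (σ : Fin n → ℝ) (x y : Fin n → Fin n → ℂ)
    (hx : ∀ i j, dotProduct (star (x i)) (x j) = if i = j then 1 else 0)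
    (hy : ∀ i j, dotProduct (star (y i)) (y j) = if i = j then 1 else 0)
    (hmono : Antitone σ) (hpos : ∀ i, 0 ≤ σ i)
    (A : Matrix (Fin n) (Fin n) ℂ)
    (hA : A = ∑ i, (σ i : ℂ) • Matrix.vecMulVec (x i) (star (y i)))
    (hxi : ∀ i : Fin n, i ≠ ⟨1, by omega⟩ → x i ⟨0, by omega⟩ = 0)
    (p : ℕ)
    (hAzero : ∀ j : Fin n, p ≤ (j : ℕ) + 1 → A ⟨0, by omega⟩ j = 0)
    (B : Matrix (Fin n) (Fin n) ℂ)
    (hBdef : B = (σ ⟨1, by omega⟩ : ℂ) •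
      Matrix.vecMulVec (x ⟨1, by omega⟩) (star (y ⟨1, by omega⟩))) :
    (∀ j : Fin n, p ≤ (j : ℕ) + 1 → B ⟨0, by omega⟩ j = 0) ∧
      BJ A B ∧ (0 < σ ⟨1, by omega⟩ → ¬ BJ B A) := by
  set i1 : Fin n := ⟨1, by omega⟩
  have hA' : A = rankOneSum x y (fun i => (σ i : ℂ)) := hA
  have hB' : B = rankOneSum x y (Pi.single i1 (σ i1 : ℂ)) := by rw [hBdef, rankOneSum_single]
  have hx' := orthonormal_toLp_of_star_dotProduct hx
  have hy' := orthonormal_toLp_of_star_dotProduct hy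
  refine ⟨fun j hj => ?_, ?_, fun hσ => ?_⟩
  · rw [← hAzero j hj, hA', hB', rankOneSum_apply_eq_single (τ := fun i => (σ i : ℂ)) hxi]
  · rw [hA', hB']
    refine bj_rankOneSum_single hx' hy' (k := ⟨0, by omega⟩) (by simp [i1, Fin.ext_iff])
      (fun i => ?_) _
    simp only [Complex.norm_real, Real.norm_of_nonneg (hpos _)]
    exact hmono (Nat.zero_le _)
  · rw [hA', hB']
    exact not_bj_rankOneSum_single (τ := fun i => (σ i : ℂ)) hx' hy' (by exact_mod_cast hσ.ne')
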